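/- arXiv:2311.06287 — 2 statements merged into one kernel-verified Lean document; each statement's English description precedes it below -/
import Mathlib

section
/- For every non-negative integer n, the following identities of rational numbers hold: ∑_{k=1}^{n} L(2k+1)/(F(2k+1)² + 1) = 3/2 − L(2(n+1))/(F(2(n+1))² + 1), and ∑_{k=1}^{n} (L(2k+1)/(L(2k)·L(2k+2)))·((F(2k)² + 1)·(F(2k+2)² + 1)/(F(2k+1)² + 1)) = (F(2(n+1))² + 1)/L(2n+2) − 2/3. -/
/-!
Put `a = F (2k)` and `b = F (2k+1)`. Cassini's identity `b² - ab - a² = 1` factors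
`F (2k)² + 1 = b (b - a)`, `F (2k+1)² + 1 = (b - a)(2b + a)` and `F (2k+2)² + 1 = b (2b + a)`,
while `L (2k) = 2b - a`, `L (2k+1) = 2a + b` and `L (2k+2) = 3b + a`. With these factorizations
both summands become differences of consecutive terms,
`L (2k+1) / (F (2k+1)² + 1) = L (2k) / (F (2k)² + 1) - L (2k+2) / (F (2k+2)² + 1)` and
`(F (2k+2)² + 1) / L (2k+2) - (F (2k)² + 1) / L (2k)`, so both sums telescope.
-/

def IsFibonacciLike {R : Type*} [Add R] (x : ℤ → R) : Prop :=
  ∀ n, x (n + 2) = x (n + 1) + x n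

def cassiniForm {R : Type*} [CommRing R] (x : ℤ → R) (n : ℤ) : R :=
  x (n + 1) ^ 2 - x n * x (n + 1) - x n ^ 2

namespace IsFibonacciLike

variable {R : Type*} [CommRing R] {x y : ℤ → R}

theorem of_eq_sub_one_add_sub_two (h : ∀ n, x n = x (n - 1) + x (n - 2)) : IsFibonacciLike x := by
  intro n
  simpa only [add_sub_cancel_right, add_sub_assoc, show (2 : ℤ) - 1 = 1 by norm_num]
    using h (n + 2)

theorem intCast {x : ℤ → ℤ} (hx : IsFibonacciLike x) : IsFibonacciLike fun n ↦ (x n : R) := by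
  intro n
  push_cast [hx n]
  rfl

theorem eq_sub (hx : IsFibonacciLike x) (n : ℤ) : x n = x (n + 2) - x (n + 1) := by
  rw [hx, add_sub_cancel_left]

theorem add_three (hx : IsFibonacciLike x) (n : ℤ) : x (n + 3) = x n + 2 * x (n + 1) := by
  rw [show n + 3 = n + 1 + 2 by ring, hx, show n + 1 + 1 = n + 2 by ring, hx]
  ring

theorem eq_of_eq_of_eq (hx : IsFibonacciLike x) (hy : IsFibonacciLike y)
    (h0 : x 0 = y 0) (h1 : x 1 = y 1) : x = y := by
  suffices h : ∀ n, x n = y n ∧ x (n + 1) = y (n + 1) from funext fun n ↦ (h n).1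
  intro n
  induction n with
  | zero => exact ⟨h0, by rwa [zero_add]⟩
  | succ i ih => exact ⟨ih.2, by rw [add_assoc, one_add_one_eq_two, hx, hy, ih.1, ih.2]⟩
  | pred i ih =>
    have e : -(i : ℤ) - 1 + 2 = -i + 1 := by ring
    refine ⟨?_, by rw [sub_add_cancel, ih.1]⟩
    rw [hx.eq_sub, hy.eq_sub, e, sub_add_cancel, ih.1, ih.2]

theorem cassiniForm_add_one (hx : IsFibonacciLike x) (n : ℤ) :
    cassiniForm x (n + 1) = -cassiniForm x n := by
  simp only [cassiniForm, add_assoc, one_add_one_eq_two, hx n]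
  ring

theorem cassiniForm_two_mul (hx : IsFibonacciLike x) (k : ℤ) :
    cassiniForm x (2 * k) = cassiniForm x 0 := by
  have two_step (n : ℤ) : cassiniForm x (n + 2) = cassiniForm x n := by
    rw [← one_add_one_eq_two, ← add_assoc, hx.cassiniForm_add_one, hx.cassiniForm_add_one,
      neg_neg]
  induction k with
  | zero => rw [mul_zero]
  | succ i ih => rw [mul_add_one, two_step, ih]
  | pred i ih => rw [← ih, ← two_step]; congr 1; ring

theorem cassiniForm_two_mul_eq_one (hx : IsFibonacciLike x) (h0 : x 0 = 0) (h1 : x 1 = 1)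
    (k : ℤ) : cassiniForm x (2 * k) = 1 := by
  rw [hx.cassiniForm_two_mul, cassiniForm, zero_add, h0, h1]
  ring

end IsFibonacciLike

section Lucas

variable {R : Type*} [CommRing R] {f l : ℤ → R}

theorem lucas_eq_two_mul_fib_add_one_sub_fib
    (hf : IsFibonacciLike f) (hf0 : f 0 = 0) (hf1 : f 1 = 1)
    (hl : IsFibonacciLike l) (hl0 : l 0 = 2) (hl1 : l 1 = 1) (m : ℤ) :
    l m = 2 * f (m + 1) - f m := by
  have hg : IsFibonacciLike fun m ↦ 2 * f (m + 1) - f m := fun n ↦ by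
    dsimp only
    rw [show n + 2 + 1 = n + 1 + 2 by ring, hf (n + 1), show n + 1 + 1 = n + 2 by ring, hf n]
    ring
  have hf2 : f 2 = 1 := by simpa [hf0, hf1] using hf 0
  refine congrFun (hl.eq_of_eq_of_eq hg ?_ ?_) m
  · simp [hf0, hf1, hl0]
  · norm_num [hf1, hf2, hl1]

theorem lucas_add_one_eq (hf : IsFibonacciLike f) (hl : ∀ m, l m = 2 * f (m + 1) - f m)
    (n : ℤ) :
    l (n + 1) = 2 * f n + f (n + 1) := by
  rw [hl, add_assoc, one_add_one_eq_two, hf]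
  ring

theorem lucas_add_two_eq (hf : IsFibonacciLike f) (hl : ∀ m, l m = 2 * f (m + 1) - f m)
    (n : ℤ) :
    l (n + 2) = 3 * f (n + 1) + f n := by
  rw [hl, show n + 2 + 1 = n + 3 by ring, hf.add_three, hf]
  ring

end Lucas

theorem Finset.sum_Icc_one_eq_sub {M : Type*} [AddCommGroup M] {t g : ℕ → M}
    (h : ∀ k, t k = g (k + 1) - g k) (n : ℕ) :
    ∑ k ∈ Finset.Icc 1 n, t k = g (n + 1) - g 1 := by
  rw [Finset.sum_congr rfl fun k _ ↦ h k, ← Finset.Ico_add_one_right_eq_Icc,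
    Finset.sum_Ico_sub g (by omega)]

section OrderedField

variable {K : Type*} [Field K] [LinearOrder K] [IsStrictOrderedRing K] {a b : K}

/-- Since `b (b - a) = a² + 1` and `b (2b + a) = (a + b)² + 1` are positive, `b`, `b - a` and
`2b + a` have the same sign. -/
theorem factors_ne_zero_of_cassini (hc : b ^ 2 - a * b - a ^ 2 = 1) :
    b ≠ 0 ∧ b - a ≠ 0 ∧ 2 * b + a ≠ 0 ∧ 2 * b - a ≠ 0 ∧ 3 * b + a ≠ 0 := by
  have h₁ : 0 < b * (b - a) := by nlinarith [sq_nonneg a]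
  have h₂ : 0 < b * (2 * b + a) := by nlinarith [sq_nonneg (a + b)]
  have hb : b ≠ 0 := left_ne_zero_of_mul h₁.ne'
  have hb2 := mul_self_pos.2 hb
  refine ⟨hb, right_ne_zero_of_mul h₁.ne', right_ne_zero_of_mul h₂.ne', ?_, ?_⟩
  · exact right_ne_zero_of_mul (show 0 < b * (2 * b - a) by linarith).ne'
  · exact right_ne_zero_of_mul (show 0 < b * (3 * b + a) by linarith).ne'

theorem div_sq_add_one_eq_sub_of_cassini (hc : b ^ 2 - a * b - a ^ 2 = 1) :
    (2 * a + b) / (b ^ 2 + 1) = (2 * b - a) / (a ^ 2 + 1) - (3 * b + a) / ((b + a) ^ 2 + 1) := by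
  obtain ⟨hb, hba, h2ba, -, -⟩ := factors_ne_zero_of_cassini hc
  rw [show a ^ 2 + 1 = b * (b - a) by linear_combination -hc,
    show b ^ 2 + 1 = (b - a) * (2 * b + a) by linear_combination -hc,
    show (b + a) ^ 2 + 1 = b * (2 * b + a) by linear_combination -hc]
  field_simp
  ring

theorem div_mul_div_eq_sub_of_cassini (hc : b ^ 2 - a * b - a ^ 2 = 1) :
    (2 * a + b) / ((2 * b - a) * (3 * b + a)) * ((a ^ 2 + 1) * ((b + a) ^ 2 + 1) / (b ^ 2 + 1)) =
      ((b + a) ^ 2 + 1) / (3 * b + a) - (a ^ 2 + 1) / (2 * b - a) := by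
  obtain ⟨hb, hba, h2ba, hl₀, hl₂⟩ := factors_ne_zero_of_cassini hc
  rw [show a ^ 2 + 1 = b * (b - a) by linear_combination -hc,
    show b ^ 2 + 1 = (b - a) * (2 * b + a) by linear_combination -hc,
    show (b + a) ^ 2 + 1 = b * (2 * b + a) by linear_combination -hc]
  rw [div_mul_div_comm, div_sub_div _ _ hl₂ hl₀, div_eq_div_iff (by positivity) (by positivity)]
  ring

variable {f l : ℤ → K}

theorem lucas_odd_div_eq_sub (hf : IsFibonacciLike f) (hf0 : f 0 = 0) (hf1 : f 1 = 1)
    (hl : ∀ m, l m = 2 * f (m + 1) - f m) (k : ℤ) :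
    l (2 * k + 1) / (f (2 * k + 1) ^ 2 + 1) =
      l (2 * k) / (f (2 * k) ^ 2 + 1) - l (2 * k + 2) / (f (2 * k + 2) ^ 2 + 1) := by
  rw [hl (2 * k), lucas_add_one_eq hf hl, lucas_add_two_eq hf hl, hf]
  exact div_sq_add_one_eq_sub_of_cassini (hf.cassiniForm_two_mul_eq_one hf0 hf1 k)

theorem lucas_odd_div_mul_eq_sub (hf : IsFibonacciLike f) (hf0 : f 0 = 0) (hf1 : f 1 = 1)
    (hl : ∀ m, l m = 2 * f (m + 1) - f m) (k : ℤ) :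
    l (2 * k + 1) / (l (2 * k) * l (2 * k + 2)) *
        ((f (2 * k) ^ 2 + 1) * (f (2 * k + 2) ^ 2 + 1) / (f (2 * k + 1) ^ 2 + 1)) =
      (f (2 * k + 2) ^ 2 + 1) / l (2 * k + 2) - (f (2 * k) ^ 2 + 1) / l (2 * k) := by
  rw [hl (2 * k), lucas_add_one_eq hf hl, lucas_add_two_eq hf hl, hf]
  exact div_mul_div_eq_sub_of_cassini (hf.cassiniForm_two_mul_eq_one hf0 hf1 k)

theorem sum_lucas_odd_div (hf : IsFibonacciLike f) (hf0 : f 0 = 0) (hf1 : f 1 = 1)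
    (hl : ∀ m, l m = 2 * f (m + 1) - f m) (n : ℕ) :
    ∑ k ∈ Finset.Icc 1 n, l (2 * (k : ℤ) + 1) / (f (2 * (k : ℤ) + 1) ^ 2 + 1) =
      l 2 / (f 2 ^ 2 + 1) - l (2 * ((n : ℤ) + 1)) / (f (2 * ((n : ℤ) + 1)) ^ 2 + 1) := by
  rw [Finset.sum_Icc_one_eq_sub
    (g := fun k : ℕ ↦ -(l (2 * (k : ℤ)) / (f (2 * (k : ℤ)) ^ 2 + 1))) fun k ↦ ?_]
  · push_cast
    ring
  · simp only [Nat.cast_add, Nat.cast_one, mul_add_one (2 : ℤ)]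
    rw [lucas_odd_div_eq_sub hf hf0 hf1 hl]
    ring

theorem sum_lucas_odd_div_mul (hf : IsFibonacciLike f) (hf0 : f 0 = 0) (hf1 : f 1 = 1)
    (hl : ∀ m, l m = 2 * f (m + 1) - f m) (n : ℕ) :
    ∑ k ∈ Finset.Icc 1 n, l (2 * (k : ℤ) + 1) / (l (2 * (k : ℤ)) * l (2 * (k : ℤ) + 2)) *
        ((f (2 * (k : ℤ)) ^ 2 + 1) * (f (2 * (k : ℤ) + 2) ^ 2 + 1) /
          (f (2 * (k : ℤ) + 1) ^ 2 + 1)) =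
      (f (2 * ((n : ℤ) + 1)) ^ 2 + 1) / l (2 * ((n : ℤ) + 1)) - (f 2 ^ 2 + 1) / l 2 := by
  rw [Finset.sum_Icc_one_eq_sub
    (g := fun k : ℕ ↦ (f (2 * (k : ℤ)) ^ 2 + 1) / l (2 * (k : ℤ))) fun k ↦ ?_]
  · push_cast
    ring
  · simp only [Nat.cast_add, Nat.cast_one, mul_add_one (2 : ℤ)]
    rw [lucas_odd_div_mul_eq_sub hf hf0 hf1 hl]

end OrderedField

/-- two telescoping summation identities over the rationals. -/
theorem statement6 (F L : ℤ → ℤ)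
    (hF0 : F 0 = 0) (hF1 : F 1 = 1) (hF : ∀ n : ℤ, F n = F (n - 1) + F (n - 2))
    (hL0 : L 0 = 2) (hL1 : L 1 = 1) (hL : ∀ n : ℤ, L n = L (n - 1) + L (n - 2))
    (n : ℕ) :
    (∑ k ∈ Finset.Icc 1 n,
        (L (2 * (k : ℤ) + 1) : ℚ) / ((F (2 * (k : ℤ) + 1) : ℚ) ^ 2 + 1) =
      3 / 2 - (L (2 * ((n : ℤ) + 1)) : ℚ) / ((F (2 * ((n : ℤ) + 1)) : ℚ) ^ 2 + 1)) ∧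
    (∑ k ∈ Finset.Icc 1 n,
        ((L (2 * (k : ℤ) + 1) : ℚ) / ((L (2 * (k : ℤ)) : ℚ) * (L (2 * (k : ℤ) + 2) : ℚ))) *
          (((F (2 * (k : ℤ)) : ℚ) ^ 2 + 1) * ((F (2 * (k : ℤ) + 2) : ℚ) ^ 2 + 1) /
            ((F (2 * (k : ℤ) + 1) : ℚ) ^ 2 + 1)) =
      ((F (2 * ((n : ℤ) + 1)) : ℚ) ^ 2 + 1) / (L (2 * (n : ℤ) + 2) : ℚ) - 2 / 3) := by
  have hFq : IsFibonacciLike fun m ↦ (F m : ℚ) :=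
    (IsFibonacciLike.of_eq_sub_one_add_sub_two hF).intCast
  have hLq : IsFibonacciLike fun m ↦ (L m : ℚ) :=
    (IsFibonacciLike.of_eq_sub_one_add_sub_two hL).intCast
  have hF0q : (F 0 : ℚ) = 0 := by simp [hF0]
  have hF1q : (F 1 : ℚ) = 1 := by simp [hF1]
  have hlucas :=
    lucas_eq_two_mul_fib_add_one_sub_fib hFq hF0q hF1q hLq (by simp [hL0]) (by simp [hL1])
  have hF2 : F 2 = 1 := by rw [hF 2]; norm_num [hF0, hF1]
  have hL2 : L 2 = 3 := by rw [hL 2]; norm_num [hL0, hL1]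
  constructor
  · rw [sum_lucas_odd_div hFq hF0q hF1q hlucas, hF2, hL2]
    norm_num
  · rw [sum_lucas_odd_div_mul hFq hF0q hF1q hlucas, hF2, hL2, mul_add_one]
    norm_num
end

section
/- For all integers k and r, 5·F(k)·G(k+r) − L(k)·(G(k+r+1) + G(k+r−1)) = (−1)^{k−1}·2·(G(r+1) + G(r−1)). -/
/-!
Every gibonacci sequence satisfies `G (m + n) = F n * G (m + 1) + F (n - 1) * G m`, and
`L n = F (n + 1) + F (n - 1)`. Substituting these for `G (k + r)`, `G (k + r ± 1)` and `L k`
turns the left-hand side into a quadratic form in `F k, F (k - 1)` times a linear form in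
`G (r + 1), G r`; the quadratic form is Cassini's `F k ^ 2 - F k * F (k - 1) - F (k - 1) ^ 2`,
which equals `(-1) ^ (k - 1)`.
-/

def IsGibonacci {R : Type*} [Add R] (G : ℤ → R) : Prop :=
  ∀ n : ℤ, G n = G (n - 1) + G (n - 2)

theorem eq_neg_one_zpow_mul_of_forall_succ_eq_neg {K : Type*} [DivisionRing K] {u : ℤ → K}
    (hu : ∀ n, u (n + 1) = -u n) (n : ℤ) : u n = (-1) ^ n * u 0 := by
  have hne : (-1 : K) ≠ 0 := by norm_num
  induction n using Int.induction_on with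
  | zero => simp
  | succ n ih => rw [hu, ih, zpow_add_one₀ hne]; simp
  | pred n ih =>
    rw [zpow_sub_one₀ hne, inv_neg_one, ← neg_neg (u _), ← hu, sub_add_cancel, ih]
    simp

namespace IsGibonacci

section AddCommGroup

variable {R : Type*} [AddCommGroup R] {G H : ℤ → R}

theorem add_two (hG : IsGibonacci G) (n : ℤ) : G (n + 2) = G (n + 1) + G n := by
  convert hG (n + 2) using 2 <;> ring_nf

theorem add (hG : IsGibonacci G) (hH : IsGibonacci H) : IsGibonacci (fun n => G n + H n) :=
  fun n => by simp only [hG n, hH n]; abel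

theorem comp_add_const (hG : IsGibonacci G) (m : ℤ) : IsGibonacci (fun n => G (n + m)) :=
  fun n => by convert hG (n + m) using 3 <;> ring

theorem ext (hG : IsGibonacci G) (hH : IsGibonacci H) (h0 : G 0 = H 0) (h1 : G 1 = H 1) :
    G = H := by
  have key : ∀ n : ℤ, G n = H n ∧ G (n + 1) = H (n + 1) := by
    intro n
    induction n using Int.induction_on with
    | zero => exact ⟨h0, by simpa using h1⟩
    | succ n ih =>
      refine ⟨ih.2, ?_⟩
      rw [add_assoc, one_add_one_eq_two, hG.add_two, hH.add_two, ih.1, ih.2]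
    | pred n ih =>
      refine ⟨?_, by rw [sub_add_cancel]; exact ih.1⟩
      have hG' := hG.add_two (-n - 1)
      have hH' := hH.add_two (-n - 1)
      rw [show -(n : ℤ) - 1 + 2 = -n + 1 by ring, sub_add_cancel] at hG' hH'
      rw [ih.1, ih.2] at hG'
      exact add_left_cancel (hG'.symm.trans hH')
  exact funext fun n => (key n).1

theorem sub_one (hG : IsGibonacci G) (n : ℤ) : G (n - 1) = G (n + 1) - G n := by
  rw [hG (n + 1), add_sub_cancel_right, add_sub_cancel_left]
  congr 1
  ring

end AddCommGroup

section Ring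

variable {R : Type*} [Ring R] {F G L : ℤ → R}

theorem mul_const (hG : IsGibonacci G) (c : R) : IsGibonacci (fun n => G n * c) :=
  fun n => by simp only [hG n, add_mul]

theorem intCast {G : ℤ → ℤ} (hG : IsGibonacci G) : IsGibonacci (fun n => (G n : R)) :=
  fun n => by simp only [hG n, Int.cast_add]

theorem fib_neg_one (hF : IsGibonacci F) (hF0 : F 0 = 0) (hF1 : F 1 = 1) : F (-1) = 1 := by
  simpa [hF0, hF1] using hF.sub_one 0

theorem apply_add (hG : IsGibonacci G) (hF : IsGibonacci F) (hF0 : F 0 = 0) (hF1 : F 1 = 1)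
    (m n : ℤ) : G (m + n) = F n * G (m + 1) + F (n - 1) * G m := by
  have hsum : IsGibonacci (fun n => F n * G (m + 1) + F (n - 1) * G m) := by
    simp_rw [sub_eq_add_neg]
    exact (hF.mul_const _).add ((hF.comp_add_const _).mul_const _)
  rw [add_comm]
  refine congrFun (ext (hG.comp_add_const m) hsum ?_ ?_) n
  · simp [hF0, hF.fib_neg_one hF0 hF1]
  · simp [hF0, hF1, add_comm]

theorem lucas_eq_fib_add_fib (hL : IsGibonacci L) (hL0 : L 0 = 2) (hL1 : L 1 = 1)
    (hF : IsGibonacci F) (hF0 : F 0 = 0) (hF1 : F 1 = 1) (n : ℤ) :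
    L n = F (n + 1) + F (n - 1) := by
  have hsum : IsGibonacci (fun n => F (n + 1) + F (n - 1)) := by
    simp_rw [sub_eq_add_neg]
    exact (hF.comp_add_const _).add (hF.comp_add_const _)
  refine congrFun (ext hL hsum ?_ ?_) n
  · simp [hL0, hF1, hF.fib_neg_one hF0 hF1, one_add_one_eq_two]
  · have hF2 : F 2 = 1 := by simpa [hF0, hF1] using hF.add_two 0
    simp [hL1, hF0, hF2, one_add_one_eq_two]

end Ring

section CommRing

variable {R : Type*} [CommRing R] {G : ℤ → R}

theorem sq_sub_mul_sub_sq_succ (hG : IsGibonacci G) (n : ℤ) :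
    G (n + 2) ^ 2 - G (n + 2) * G (n + 1) - G (n + 1) ^ 2 =
      -(G (n + 1) ^ 2 - G (n + 1) * G n - G n ^ 2) := by
  rw [hG.add_two]
  ring

end CommRing

theorem cassini {K : Type*} [Field K] {F : ℤ → K} (hF : IsGibonacci F) (hF0 : F 0 = 0)
    (hF1 : F 1 = 1) (n : ℤ) : F (n + 1) ^ 2 - F (n + 1) * F n - F n ^ 2 = (-1) ^ n := by
  rw [eq_neg_one_zpow_mul_of_forall_succ_eq_neg
    (u := fun n => F (n + 1) ^ 2 - F (n + 1) * F n - F n ^ 2) (fun n => ?_) n]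
  · simp [hF0, hF1]
  · simpa only [add_assoc, one_add_one_eq_two] using hF.sq_sub_mul_sub_sq_succ n

end IsGibonacci

theorem five_fib_mul_sub_lucas_mul {K : Type*} [Field K] {F L G : ℤ → K}
    (hF : IsGibonacci F) (hF0 : F 0 = 0) (hF1 : F 1 = 1)
    (hL : IsGibonacci L) (hL0 : L 0 = 2) (hL1 : L 1 = 1) (hG : IsGibonacci G) (k r : ℤ) :
    5 * F k * G (k + r) - L k * (G (k + r + 1) + G (k + r - 1)) =
      (-1) ^ (k - 1) * 2 * (G (r + 1) + G (r - 1)) := by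
  have shift (n : ℤ) : G (n + r) = F n * G (r + 1) + F (n - 1) * G r := by
    rw [add_comm, hG.apply_add hF hF0 hF1]
  have hGk₁ : G (k + r + 1) = F (k + 1) * G (r + 1) + F k * G r := by
    rw [add_right_comm, shift, add_sub_cancel_right]
  have hGk₂ : G (k + r - 1) = F (k - 1) * G (r + 1) + F (k - 1 - 1) * G r := by
    rw [add_sub_right_comm, shift]
  have hFk₁ : F (k + 1) = F k + F (k - 1) := by
    rw [hF (k + 1), add_sub_cancel_right, show k + 1 - 2 = k - 1 by ring]
  have hFk₂ : F (k - 1 - 1) = F k - F (k - 1) := by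
    rw [hF k, sub_sub, one_add_one_eq_two, add_sub_cancel_left]
  have hcas := hF.cassini hF0 hF1 (k - 1)
  rw [sub_add_cancel] at hcas
  rw [hL.lucas_eq_fib_add_fib hL0 hL1 hF hF0 hF1, shift, hGk₁, hGk₂, hFk₁, hFk₂,
    hG.sub_one r]
  linear_combination (4 * G (r + 1) - 2 * G r) * hcas

/-- a generalization of the fundamental identity of Fibonacci and
Lucas numbers to a gibonacci sequence. -/
theorem statement14 (F L : ℤ → ℤ)
    (hF0 : F 0 = 0) (hF1 : F 1 = 1) (hF : ∀ n : ℤ, F n = F (n - 1) + F (n - 2))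
    (hL0 : L 0 = 2) (hL1 : L 1 = 1) (hL : ∀ n : ℤ, L n = L (n - 1) + L (n - 2))
    (G : ℤ → ℝ) (hG : ∀ n : ℤ, G n = G (n - 1) + G (n - 2))
    (k r : ℤ) :
    5 * (F k : ℝ) * G (k + r) - (L k : ℝ) * (G (k + r + 1) + G (k + r - 1)) =
      (-1 : ℝ) ^ (k - 1) * 2 * (G (r + 1) + G (r - 1)) :=
  five_fib_mul_sub_lucas_mul (IsGibonacci.intCast hF) (by simp [hF0]) (by simp [hF1])
    (IsGibonacci.intCast hL) (by simp [hL0]) (by simp [hL1]) hG k r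
end
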